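/- arXiv:math/0405410 — 7 statements merged into one kernel-verified Lean document; each statement's English description precedes it below -/
import Mathlib

section
/- Let u_1, …, u_N be nonnegative reals with ∑_{k=1}^N u_k = 1 such that the greatest common divisor of the set of indices k with u_k > 0 equals 1. Then the polynomial 1 − ∑_{k=1}^N u_k w^k has w = 1 as a simple zero, and has no other zero w ∈ ℂ with |w| ≤ 1. -/
/-- the polynomial `1 - ∑_{k=1}^N u_k w^k` has `w = 1` as a simple zero
and no other zero in the closed unit disc. -/
theorem stmt_4
    (N : ℕ) (u : ℕ → ℝ)
    (hu_nonneg : ∀ k ∈ Finset.Icc 1 N, 0 ≤ u k)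
    (hu_sum : ∑ k ∈ Finset.Icc 1 N, u k = 1)
    (hu_gcd : ((Finset.Icc 1 N).filter (fun k => 0 < u k)).gcd id = 1) :
    (1 - ∑ k ∈ Finset.Icc 1 N, (u k : ℂ) * (1 : ℂ) ^ k = 0) ∧
    deriv (fun w : ℂ => 1 - ∑ k ∈ Finset.Icc 1 N, (u k : ℂ) * w ^ k) 1 ≠ 0 ∧
    ∀ w : ℂ, ‖w‖ ≤ 1 → (1 - ∑ k ∈ Finset.Icc 1 N, (u k : ℂ) * w ^ k = 0) → w = 1 := by
  refine ⟨?_, ?_, ?_⟩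
  · have : ∑ k ∈ Finset.Icc 1 N, (u k : ℂ) * (1 : ℂ) ^ k
        = ((∑ k ∈ Finset.Icc 1 N, u k : ℝ) : ℂ) := by
      push_cast; simp
    rw [this, hu_sum]; simp
  · have hd : HasDerivAt (fun w : ℂ => 1 - ∑ k ∈ Finset.Icc 1 N, (u k : ℂ) * w ^ k)
        (0 - ∑ k ∈ Finset.Icc 1 N, (u k : ℂ) * ((k : ℂ) * (1 : ℂ) ^ (k - 1))) 1 := by
      exact (hasDerivAt_const _ _).sub
        (HasDerivAt.fun_sum fun k _ => (hasDerivAt_pow k 1).const_mul _)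
    rw [hd.deriv]
    have hc : ∑ k ∈ Finset.Icc 1 N, (u k : ℂ) * ((k : ℂ) * (1 : ℂ) ^ (k - 1))
        = ((∑ k ∈ Finset.Icc 1 N, u k * k : ℝ) : ℂ) := by
      push_cast; simp
    rw [hc]
    have h1 : (1 : ℝ) ≤ ∑ k ∈ Finset.Icc 1 N, u k * k := by
      calc (1 : ℝ) = ∑ k ∈ Finset.Icc 1 N, u k := hu_sum.symm
        _ ≤ ∑ k ∈ Finset.Icc 1 N, u k * k := by
            apply Finset.sum_le_sum
            intro k hk
            have hk1 : (1 : ℝ) ≤ k := by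
              exact_mod_cast (Finset.mem_Icc.mp hk).1
            nlinarith [hu_nonneg k hk]
    intro h
    rw [zero_sub, neg_eq_zero, Complex.ofReal_eq_zero] at h
    linarith
  · intro w hw hzero
    have hsum : ∑ k ∈ Finset.Icc 1 N, (u k : ℂ) * w ^ k = 1 := (sub_eq_zero.mp hzero).symm
    have hre : ∑ k ∈ Finset.Icc 1 N, u k * (w ^ k).re = 1 := by
      have := congrArg Complex.re hsum
      simpa [Complex.re_sum, Complex.re_ofReal_mul] using this
    have hle : ∀ k ∈ Finset.Icc 1 N, u k * (w ^ k).re ≤ u k := by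
      intro k hk
      have h1 : (w ^ k).re ≤ ‖w ^ k‖ := Complex.re_le_norm _
      have h2 : ‖w ^ k‖ ≤ 1 := by
        rw [norm_pow]
        exact pow_le_one₀ (norm_nonneg w) hw
      nlinarith [hu_nonneg k hk]
    have heq : ∀ k ∈ Finset.Icc 1 N, u k * (w ^ k).re = u k := by
      rw [← Finset.sum_eq_sum_iff_of_le hle]
      rw [hre, hu_sum]
    have hpow : ∀ k ∈ (Finset.Icc 1 N).filter (fun k => 0 < u k), w ^ k = 1 := by
      intro k hk
      rw [Finset.mem_filter] at hk
      have hrek : (w ^ k).re = 1 := by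
        have h := heq k hk.1
        exact mul_left_cancel₀ hk.2.ne' (by linarith : u k * (w ^ k).re = u k * 1)
      have habs : ‖w ^ k‖ ≤ 1 := by
        rw [norm_pow]; exact pow_le_one₀ (norm_nonneg w) hw
      have him : (w ^ k).im = 0 := by
        have habs' : ‖w ^ k‖ ≤ 1 := by exact habs
        have h1 : Complex.normSq (w ^ k) ≤ 1 := by
          have := Complex.sq_norm (w ^ k)
          nlinarith [norm_nonneg (w ^ k)]
        have := Complex.normSq_apply (w ^ k)
        nlinarith [sq_nonneg (w ^ k).im]
      exact Complex.ext (by simp [hrek]) (by simp [him])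
    have hdvd : orderOf w ∣ 1 := by
      rw [← hu_gcd]
      apply Finset.dvd_gcd
      intro k hk
      exact orderOf_dvd_of_pow_eq_one (hpow k hk)
    have : orderOf w = 1 := Nat.dvd_one.mp hdvd
    exact orderOf_eq_one_iff.mp this
end

section
/- Let u_1,…,u_N and v_1,…,v_N be nonnegative reals with ∑_{k=1}^N (u_k + v_k) = 1 and ∑_{k=1}^N v_k > 0, such that the greatest common divisor of the set of indices k with u_k + v_k > 0 equals 1, and such that there exists either an odd k ≤ N with u_k > 0 or an even k ≤ N with v_k > 0. Set U(w) = ∑_{k=1}^N u_k w^k and V(w) = ∑_{k=1}^N v_k w^k. Then the polynomial 1 − U(w) + V(w) has no zero w ∈ ℂ with |w| ≤ 1. -/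
lemma aux_re_one {z : ℂ} (h1 : ‖z‖ ≤ 1) (h2 : z.re = 1) : z = 1 := by
  have hn : Complex.normSq z ≤ 1 := by
    have hs := Complex.sq_norm z
    have habs : ‖z‖ ≤ 1 := h1
    nlinarith [norm_nonneg z]
  have him : z.im = 0 := by
    have h3 : z.re * z.re + z.im * z.im ≤ 1 := by
      simpa [Complex.normSq_apply] using hn
    nlinarith [mul_self_nonneg z.im]
  exact Complex.ext (by simp [h2]) (by simp [him])

lemma aux_re_neg_one {z : ℂ} (h1 : ‖z‖ ≤ 1) (h2 : z.re = -1) : z = -1 := by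
  have := aux_re_one (z := -z) (by simpa using h1) (by simp [h2])
  linear_combination -this

/-- the polynomial `1 - U(w) + V(w)` has no zero in the closed unit disc. -/
theorem stmt_5
    (N : ℕ) (u v : ℕ → ℝ)
    (hu_nonneg : ∀ k ∈ Finset.Icc 1 N, 0 ≤ u k)
    (hv_nonneg : ∀ k ∈ Finset.Icc 1 N, 0 ≤ v k)
    (huv_sum : ∑ k ∈ Finset.Icc 1 N, (u k + v k) = 1)
    (hv_pos : 0 < ∑ k ∈ Finset.Icc 1 N, v k)
    (huv_gcd : ((Finset.Icc 1 N).filter (fun k => 0 < u k + v k)).gcd id = 1)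
    (hparity : ∃ k ∈ Finset.Icc 1 N, (Odd k ∧ 0 < u k) ∨ (Even k ∧ 0 < v k)) :
    ∀ w : ℂ, ‖w‖ ≤ 1 →
      1 - (∑ k ∈ Finset.Icc 1 N, (u k : ℂ) * w ^ k) +
        (∑ k ∈ Finset.Icc 1 N, (v k : ℂ) * w ^ k) ≠ 0 := by
  intro w hw h
  have hwk : ∀ k : ℕ, ‖w ^ k‖ ≤ 1 := by
    intro k
    rw [norm_pow]
    exact pow_le_one₀ (norm_nonneg w) hw
  -- complex sum equals 1
  have hsum : ∑ k ∈ Finset.Icc 1 N, ((u k : ℂ) - v k) * w ^ k = 1 := by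
    have e1 : ∑ k ∈ Finset.Icc 1 N, ((u k : ℂ) - v k) * w ^ k =
        (∑ k ∈ Finset.Icc 1 N, (u k : ℂ) * w ^ k) -
          (∑ k ∈ Finset.Icc 1 N, (v k : ℂ) * w ^ k) := by
      rw [← Finset.sum_sub_distrib]
      exact Finset.sum_congr rfl fun k _ => by ring
    rw [e1]; linear_combination -h
  -- real part
  have hre : ∑ k ∈ Finset.Icc 1 N, (u k - v k) * (w ^ k).re = 1 := by
    have h2 := congrArg Complex.re hsum
    rw [Complex.re_sum] at h2
    simpa [Complex.mul_re] using h2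
  -- termwise bound
  have hle : ∀ k ∈ Finset.Icc 1 N, (u k - v k) * (w ^ k).re ≤ u k + v k := by
    intro k hk
    have h1 : |(w ^ k).re| ≤ 1 := (Complex.abs_re_le_norm _).trans (hwk k)
    obtain ⟨hr1, hr2⟩ := abs_le.mp h1
    have hu := hu_nonneg k hk
    have hv := hv_nonneg k hk
    nlinarith [mul_nonneg hu (sub_nonneg.2 hr2), mul_nonneg hv (by linarith : (0:ℝ) ≤ 1 + (w ^ k).re)]
  have heq : ∀ k ∈ Finset.Icc 1 N, (u k - v k) * (w ^ k).re = u k + v k :=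
    (Finset.sum_eq_sum_iff_of_le hle).mp (by rw [hre, huv_sum])
  -- key dichotomy
  have key : ∀ k ∈ Finset.Icc 1 N, (0 < u k → w ^ k = 1) ∧ (0 < v k → w ^ k = -1) := by
    intro k hk
    have hterm := heq k hk
    have hu := hu_nonneg k hk
    have hv := hv_nonneg k hk
    have h1 : |(w ^ k).re| ≤ 1 := (Complex.abs_re_le_norm _).trans (hwk k)
    obtain ⟨hr1, hr2⟩ := abs_le.mp h1
    have hsq : (u k + v k) ^ 2 = (u k - v k) ^ 2 * (w ^ k).re ^ 2 := by
      rw [← hterm]; ring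
    have hbound : 0 ≤ (u k - v k) ^ 2 * (1 - (w ^ k).re ^ 2) :=
      mul_nonneg (sq_nonneg _) (by nlinarith)
    constructor
    · intro hu0
      have hb : v k = 0 := by nlinarith [mul_nonneg hu hv]
      have hr : (w ^ k).re = 1 := by
        rw [hb] at hterm
        have := mul_left_cancel₀ (ne_of_gt hu0) (by linarith : u k * (w ^ k).re = u k * 1)
        linarith
      exact aux_re_one (hwk k) hr
    · intro hv0
      have hb : u k = 0 := by nlinarith [mul_nonneg hu hv]
      have hr : (w ^ k).re = -1 := by
        rw [hb] at hterm
        have := mul_left_cancel₀ (ne_of_gt hv0) (by linarith : v k * (w ^ k).re = v k * (-1))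
        linarith
      exact aux_re_neg_one (hwk k) hr
  -- w ^ 2 = 1
  have hz : ∀ k ∈ (Finset.Icc 1 N).filter (fun k => 0 < u k + v k), (w ^ 2) ^ k = 1 := by
    intro k hk
    obtain ⟨hk1, hk2⟩ := Finset.mem_filter.mp hk
    have hu := hu_nonneg k hk1
    have hv := hv_nonneg k hk1
    have hpm : w ^ k = 1 ∨ w ^ k = -1 := by
      rcases lt_or_ge 0 (u k) with hu0 | hu0
      · exact Or.inl ((key k hk1).1 hu0)
      · exact Or.inr ((key k hk1).2 (by linarith))
    have : (w ^ k) ^ 2 = 1 := by rcases hpm with h' | h' <;> rw [h'] <;> ring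
    calc (w ^ 2) ^ k = (w ^ k) ^ 2 := by rw [← pow_mul, ← pow_mul, Nat.mul_comm]
    _ = 1 := this
  have hord : orderOf (w ^ 2) ∣ 1 := by
    rw [← huv_gcd]
    exact Finset.dvd_gcd fun k hk => orderOf_dvd_of_pow_eq_one (hz k hk)
  have hw2 : w ^ 2 = 1 := orderOf_eq_one_iff.mp (Nat.dvd_one.mp hord)
  have hww : w = 1 ∨ w = -1 := by
    have h0 : (w - 1) * (w + 1) = 0 := by linear_combination hw2
    rcases mul_eq_zero.mp h0 with h' | h'
    · exact Or.inl (by linear_combination h')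
    · exact Or.inr (by linear_combination h')
  -- some v k0 > 0
  obtain ⟨k0, hk0, hk0v⟩ := Finset.exists_lt_of_sum_lt (f := fun _ => (0:ℝ))
    (by simpa using hv_pos)
  have hwk0 : w ^ k0 = -1 := (key k0 hk0).2 hk0v
  rcases hww with hw1 | hw1
  · rw [hw1, one_pow] at hwk0
    exact absurd hwk0 (by norm_num)
  · obtain ⟨k1, hk1, hcase⟩ := hparity
    rcases hcase with ⟨hodd, hu1⟩ | ⟨heven, hv1⟩
    · have := (key k1 hk1).1 hu1
      rw [hw1, hodd.neg_one_pow] at this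
      exact absurd this (by norm_num)
    · have := (key k1 hk1).2 hv1
      rw [hw1, heven.neg_one_pow] at this
      exact absurd this (by norm_num)
end

section
/- Let n > 1 be an integer, let a_1,…,a_n be positive reals with ∑_{k=1}^n a_k = 1, and let d_1,…,d_n and β_1,…,β_n be reals; let G be the associated similarity operator on L²[0,1]. Then for all f_1, f_2 ∈ L²[0,1] one has ‖G(f_1) − G(f_2)‖²_{L²[0,1]} = (∑_{k=1}^n a_k d_k²) · ‖f_1 − f_2‖²_{L²[0,1]}. -/
open MeasureTheory

/-- The partition points `α_k`: `α 1 = 0`, `α (k+1) = α k + a k`. -/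
noncomputable def partPt (a : ℕ → ℝ) (k : ℕ) : ℝ := ∑ l ∈ Finset.Ico 1 k, a l

/-- The similarity operator `G` associated with parameters `(n; a_k; d_k; β_k)`,
acting pointwise on functions: on each interval `(α_k, α_{k+1})` it equals
`β_k + d_k · f((x - α_k)/a_k)`, and it vanishes elsewhere. -/
noncomputable def simOp (n : ℕ) (a d β : ℕ → ℝ) (f : ℝ → ℝ) : ℝ → ℝ :=
  fun x => ∑ k ∈ Finset.Icc 1 n,
    Set.indicator (Set.Ioo (partPt a k) (partPt a (k + 1)))
      (fun t => β k + d k * f ((t - partPt a k) / a k)) x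

/-- Square of a sum of indicators of pairwise disjoint sets is the sum of the squares. -/
lemma sum_indicator_sq {ι : Type*} (s : Finset ι) (t : ι → Set ℝ)
    (h : Set.Pairwise ↑s (Function.onFun Disjoint t)) (g : ι → ℝ → ℝ) (x : ℝ) :
    (∑ k ∈ s, (t k).indicator (g k) x) ^ 2
      = ∑ k ∈ s, (t k).indicator (fun y => (g k y) ^ 2) x := by
  by_cases hx : ∃ k ∈ s, x ∈ t k
  · obtain ⟨k, hk, hxk⟩ := hx
    have hz : ∀ j ∈ s, j ≠ k → ∀ F : ℝ → ℝ, (t j).indicator F x = 0 := by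
      intro j hj hjk F
      apply Set.indicator_of_notMem
      intro hxj
      exact Set.disjoint_left.mp (h hj hk hjk) hxj hxk
    rw [Finset.sum_eq_single k (fun j hj hjk => hz j hj hjk _) (fun h' => absurd hk h'),
        Finset.sum_eq_single k (fun j hj hjk => hz j hj hjk _) (fun h' => absurd hk h'),
        Set.indicator_of_mem hxk, Set.indicator_of_mem hxk]
  · push_neg at hx
    rw [Finset.sum_eq_zero fun j hj => Set.indicator_of_notMem (hx j hj) _,
        Finset.sum_eq_zero fun j hj => Set.indicator_of_notMem (hx j hj) _]
    norm_num

/-- `‖G(f₁) - G(f₂)‖²_{L²[0,1]} = (∑ a_k d_k²) ‖f₁ - f₂‖²_{L²[0,1]}`. -/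
theorem stmt_6
    (n : ℕ) (hn : 1 < n) (a d β : ℕ → ℝ)
    (ha_pos : ∀ k ∈ Finset.Icc 1 n, 0 < a k)
    (ha_sum : ∑ k ∈ Finset.Icc 1 n, a k = 1)
    (f₁ f₂ : ℝ → ℝ)
    (hf₁ : MemLp f₁ 2 (volume.restrict (Set.Ioo (0:ℝ) 1)))
    (hf₂ : MemLp f₂ 2 (volume.restrict (Set.Ioo (0:ℝ) 1))) :
    ∫ x in Set.Ioo (0:ℝ) 1, (simOp n a d β f₁ x - simOp n a d β f₂ x) ^ 2 =
      (∑ k ∈ Finset.Icc 1 n, a k * d k ^ 2) *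
        ∫ x in Set.Ioo (0:ℝ) 1, (f₁ x - f₂ x) ^ 2 := by
  set g : ℝ → ℝ := fun x => f₁ x - f₂ x with hg_def
  -- basic facts about the partition points
  have hmono : ∀ j k : ℕ, j ≤ k → k ≤ n + 1 → partPt a j ≤ partPt a k := by
    intro j k hjk hkn
    apply Finset.sum_le_sum_of_subset_of_nonneg (Finset.Ico_subset_Ico le_rfl hjk)
    intro l hl _
    exact (ha_pos l (Finset.mem_Icc.mpr ⟨(Finset.mem_Ico.mp hl).1,
      Nat.lt_succ_iff.mp (lt_of_lt_of_le (Finset.mem_Ico.mp hl).2 hkn)⟩)).le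
  have h1 : partPt a 1 = 0 := by simp [partPt]
  have hlast : partPt a (n + 1) = 1 := by
    rw [partPt, Finset.Ico_add_one_right_eq_Icc, ha_sum]
  have hsucc : ∀ k, 1 ≤ k → partPt a (k + 1) = partPt a k + a k := by
    intro k hk
    rw [partPt, partPt, Finset.sum_Ico_succ_top hk]
  have hsub : ∀ k ∈ Finset.Icc 1 n,
      Set.Ioo (partPt a k) (partPt a (k + 1)) ⊆ Set.Ioo (0 : ℝ) 1 := by
    intro k hk
    obtain ⟨hk1, hkn⟩ := Finset.mem_Icc.mp hk
    apply Set.Ioo_subset_Ioo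
    · rw [← h1]; exact hmono 1 k hk1 (by omega)
    · rw [← hlast]; exact hmono (k + 1) (n + 1) (by omega) le_rfl
  -- disjointness of the intervals
  have hdisj : Set.Pairwise ↑(Finset.Icc 1 n)
      (Function.onFun Disjoint fun k => Set.Ioo (partPt a k) (partPt a (k + 1))) := by
    have key : ∀ j k : ℕ, j ∈ Finset.Icc 1 n → k ∈ Finset.Icc 1 n → j < k →
        Disjoint (Set.Ioo (partPt a j) (partPt a (j + 1)))
          (Set.Ioo (partPt a k) (partPt a (k + 1))) := by
      intro j k hj hk hjk
      simp only [Finset.mem_Icc] at hj hk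
      have hle : partPt a (j + 1) ≤ partPt a k := hmono (j + 1) k (by omega) (by omega)
      rw [Set.disjoint_left]
      rintro x ⟨_, hx2⟩ ⟨hx3, _⟩
      linarith
    intro j hj k hk hjk
    rcases hjk.lt_or_gt with h | h
    · exact key j k hj hk h
    · exact (key k j hk hj h).symm
  -- pointwise description of the difference
  have hdiff : ∀ x, simOp n a d β f₁ x - simOp n a d β f₂ x
      = ∑ k ∈ Finset.Icc 1 n,
          Set.indicator (Set.Ioo (partPt a k) (partPt a (k + 1)))
            (fun t => d k * g ((t - partPt a k) / a k)) x := by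
    intro x
    rw [simOp, simOp, ← Finset.sum_sub_distrib]
    refine Finset.sum_congr rfl fun k _ => ?_
    by_cases hx : x ∈ Set.Ioo (partPt a k) (partPt a (k + 1))
    · simp only [Set.indicator_of_mem hx, hg_def]; ring
    · simp [Set.indicator_of_notMem hx]
  -- integrability of `g ^ 2`
  have hg2 : IntegrableOn (fun x => g x ^ 2) (Set.Ioo (0:ℝ) 1) volume :=
    (hf₁.sub hf₂).integrable_sq
  have hg2' : IntervalIntegrable (fun x => g x ^ 2) volume 0 1 :=
    (intervalIntegrable_iff_integrableOn_Ioo_of_le zero_le_one).mpr hg2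
  -- interval integrability of each composed square on its own interval
  have hcomp : ∀ k ∈ Finset.Icc 1 n, IntervalIntegrable
      (fun x => (d k * g ((x - partPt a k) / a k)) ^ 2) volume
      (partPt a k) (partPt a (k + 1)) := by
    intro k hk
    have hak : (0:ℝ) < a k := ha_pos k hk
    have h0 : IntervalIntegrable (fun x => (d k * g x) ^ 2) volume 0 1 := by
      have heq : (fun x => (d k * g x) ^ 2) = fun x => d k ^ 2 * g x ^ 2 := by
        funext x; ring
      rw [heq]; exact hg2'.const_mul _
    have h1' := h0.comp_mul_right (c := (a k)⁻¹) enorm_ne_top enorm_ne_top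
    simp only [zero_div, one_div, inv_inv] at h1'
    -- h1' : on 0 .. a k, fun x => (d k * g (x * (a k)⁻¹))^2
    have h2' := h1'.comp_sub_right (partPt a k)
    rw [zero_add] at h2'
    rw [hsucc k (Finset.mem_Icc.mp hk).1, add_comm (partPt a k) (a k)]
    have heq2 : (fun x => (d k * g ((x - partPt a k) / a k)) ^ 2)
        = fun x => (d k * g ((x - partPt a k) * (a k)⁻¹)) ^ 2 := by
      funext x; rw [div_eq_mul_inv]
    rw [heq2]; exact h2'
  -- integrability of each indicator term over (0,1)
  have hind : ∀ k ∈ Finset.Icc 1 n, Integrable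
      (fun x => Set.indicator (Set.Ioo (partPt a k) (partPt a (k + 1)))
        (fun t => (d k * g ((t - partPt a k) / a k)) ^ 2) x)
      (volume.restrict (Set.Ioo (0:ℝ) 1)) := by
    intro k hk
    have hak : (0:ℝ) < a k := ha_pos k hk
    have hle : partPt a k ≤ partPt a (k + 1) := by
      rw [hsucc k (Finset.mem_Icc.mp hk).1]; linarith
    have hio : IntegrableOn (fun t => (d k * g ((t - partPt a k) / a k)) ^ 2)
        (Set.Ioo (partPt a k) (partPt a (k + 1))) volume :=
      (intervalIntegrable_iff_integrableOn_Ioo_of_le hle).mp (hcomp k hk)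
    rw [integrable_indicator_iff measurableSet_Ioo]
    rw [IntegrableOn, Measure.restrict_restrict measurableSet_Ioo,
      Set.inter_eq_left.mpr (hsub k hk)]
    exact hio
  -- now compute
  calc ∫ x in Set.Ioo (0:ℝ) 1, (simOp n a d β f₁ x - simOp n a d β f₂ x) ^ 2
      = ∫ x in Set.Ioo (0:ℝ) 1, ∑ k ∈ Finset.Icc 1 n,
          Set.indicator (Set.Ioo (partPt a k) (partPt a (k + 1)))
            (fun t => (d k * g ((t - partPt a k) / a k)) ^ 2) x := by
        refine setIntegral_congr_fun measurableSet_Ioo fun x _ => ?_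
        rw [hdiff x, sum_indicator_sq _ _ hdisj]
    _ = ∑ k ∈ Finset.Icc 1 n, ∫ x in Set.Ioo (0:ℝ) 1,
          Set.indicator (Set.Ioo (partPt a k) (partPt a (k + 1)))
            (fun t => (d k * g ((t - partPt a k) / a k)) ^ 2) x :=
        integral_finset_sum _ hind
    _ = ∑ k ∈ Finset.Icc 1 n, a k * d k ^ 2 * ∫ x in Set.Ioo (0:ℝ) 1, g x ^ 2 := by
        refine Finset.sum_congr rfl fun k hk => ?_
        have hak : (0:ℝ) < a k := ha_pos k hk
        have hk1 : 1 ≤ k := (Finset.mem_Icc.mp hk).1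
        have hle : partPt a k ≤ partPt a (k + 1) := by
          rw [hsucc k hk1]; linarith
        rw [setIntegral_indicator measurableSet_Ioo,
          Set.inter_eq_right.mpr (hsub k hk),
          ← integral_Ioc_eq_integral_Ioo,
          ← intervalIntegral.integral_of_le hle]
        have step1 : (∫ x in (partPt a k)..(partPt a (k + 1)),
            (d k * g ((x - partPt a k) / a k)) ^ 2)
            = a k • ∫ x in (0:ℝ)..1, (d k * g x) ^ 2 := by
          rw [hsucc k hk1, add_comm (partPt a k) (a k),
            intervalIntegral.integral_comp_sub_right
              (fun x => (d k * g (x / a k)) ^ 2) (partPt a k)]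
          simp only [sub_self, add_sub_cancel_right]
          rw [intervalIntegral.integral_comp_div (fun x => (d k * g x) ^ 2) hak.ne',
            zero_div, div_self hak.ne']
        rw [step1, smul_eq_mul, intervalIntegral.integral_of_le zero_le_one,
          integral_Ioc_eq_integral_Ioo]
        have : ∫ x in Set.Ioo (0:ℝ) 1, (d k * g x) ^ 2
            = d k ^ 2 * ∫ x in Set.Ioo (0:ℝ) 1, g x ^ 2 := by
          rw [← integral_const_mul]
          exact setIntegral_congr_fun measurableSet_Ioo fun x _ => by ring
        rw [this]; ring
    _ = (∑ k ∈ Finset.Icc 1 n, a k * d k ^ 2) * ∫ x in Set.Ioo (0:ℝ) 1, g x ^ 2 := by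
        rw [Finset.sum_mul]
end

section
/- Let n > 1 be an integer, let a_1,…,a_n be positive reals with ∑_{k=1}^n a_k = 1, and let d_1,…,d_n and β_1,…,β_n be reals; let G be the associated similarity operator on L²[0,1]. Then G is a contraction (i.e. there exists a constant 0 ≤ q < 1 with ‖G(f_1) − G(f_2)‖_{L²[0,1]} ≤ q ‖f_1 − f_2‖_{L²[0,1]} for all f_1, f_2 ∈ L²[0,1]) if and only if ∑_{k=1}^n a_k d_k² < 1. -/
open MeasureTheory

section aux

lemma partPt_mono (n : ℕ) (a : ℕ → ℝ) (ha_pos : ∀ k ∈ Finset.Icc 1 n, 0 < a k)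
    {i j : ℕ} (hi : 1 ≤ i) (hij : i ≤ j) (hj : j ≤ n + 1) :
    partPt a i ≤ partPt a j := by
  unfold partPt
  rw [← Finset.sum_Ico_consecutive _ hi hij]
  have h0 : 0 ≤ ∑ l ∈ Finset.Ico i j, a l := by
    apply Finset.sum_nonneg
    intro l hl
    rw [Finset.mem_Ico] at hl
    exact (ha_pos l (Finset.mem_Icc.mpr ⟨le_trans hi hl.1, by omega⟩)).le
  linarith

lemma partPt_succ (a : ℕ → ℝ) {k : ℕ} (hk : 1 ≤ k) :
    partPt a (k + 1) = partPt a k + a k := by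
  unfold partPt
  rw [Finset.sum_Ico_succ_top hk]

lemma partPt_subset (n : ℕ) (a : ℕ → ℝ) (ha_pos : ∀ k ∈ Finset.Icc 1 n, 0 < a k)
    (ha_sum : ∑ k ∈ Finset.Icc 1 n, a k = 1) {k : ℕ} (hk : k ∈ Finset.Icc 1 n) :
    Set.Ioo (partPt a k) (partPt a (k + 1)) ⊆ Set.Ioo (0 : ℝ) 1 := by
  rw [Finset.mem_Icc] at hk
  have h1 : partPt a 1 = 0 := by simp [partPt]
  have hN : partPt a (n + 1) = 1 := by
    unfold partPt
    rw [Finset.Ico_add_one_right_eq_Icc]; exact ha_sum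
  have hlo : (0 : ℝ) ≤ partPt a k := by
    rw [← h1]; exact partPt_mono n a ha_pos le_rfl hk.1 (by omega)
  have hhi : partPt a (k + 1) ≤ 1 := by
    rw [← hN]; exact partPt_mono n a ha_pos (by omega) (by omega) le_rfl
  intro x hx
  exact ⟨lt_of_le_of_lt hlo hx.1, lt_of_lt_of_le hx.2 hhi⟩

lemma partPt_disjoint (n : ℕ) (a : ℕ → ℝ) (ha_pos : ∀ k ∈ Finset.Icc 1 n, 0 < a k)
    {i j : ℕ} (hi : i ∈ Finset.Icc 1 n) (hj : j ∈ Finset.Icc 1 n) (hij : i ≠ j) :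
    Disjoint (Set.Ioo (partPt a i) (partPt a (i + 1)))
      (Set.Ioo (partPt a j) (partPt a (j + 1))) := by
  rw [Finset.mem_Icc] at hi hj
  rw [Set.disjoint_left]
  rcases lt_or_gt_of_ne hij with h | h
  · intro x hx hx'
    have : partPt a (i + 1) ≤ partPt a j :=
      partPt_mono n a ha_pos (by omega) (by omega) (by omega)
    exact absurd (lt_of_le_of_lt this hx'.1) (not_lt.mpr hx.2.le)
  · intro x hx hx'
    have : partPt a (j + 1) ≤ partPt a i :=
      partPt_mono n a ha_pos (by omega) (by omega) (by omega)
    exact absurd (lt_of_le_of_lt this hx.1) (not_lt.mpr hx'.2.le)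

/-- Square of a sum of indicator functions of pairwise disjoint sets. -/
lemma sq_sum_indicator {ι : Type*} (s : Finset ι) (S : ι → Set ℝ)
    (hdis : ∀ i ∈ s, ∀ j ∈ s, i ≠ j → Disjoint (S i) (S j))
    (φ : ι → ℝ → ℝ) (x : ℝ) :
    (∑ i ∈ s, (S i).indicator (φ i) x) ^ 2
      = ∑ i ∈ s, (S i).indicator (fun t => (φ i t) ^ 2) x := by
  by_cases hx : ∃ i ∈ s, x ∈ S i
  · obtain ⟨i₀, hi₀s, hi₀⟩ := hx
    have hothers : ∀ j ∈ s, j ≠ i₀ → x ∉ S j := by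
      intro j hj hne
      intro hxj
      exact Set.disjoint_left.mp (hdis j hj i₀ hi₀s hne) hxj hi₀
    rw [Finset.sum_eq_single i₀ (fun j hj hne => Set.indicator_of_notMem (hothers j hj hne) _)
        (fun h => absurd hi₀s h),
      Finset.sum_eq_single i₀ (fun j hj hne => Set.indicator_of_notMem (hothers j hj hne) _)
        (fun h => absurd hi₀s h),
      Set.indicator_of_mem hi₀, Set.indicator_of_mem hi₀]
  · push_neg at hx
    rw [Finset.sum_congr rfl (fun j hj => Set.indicator_of_notMem (hx j hj) _),
      Finset.sum_congr rfl (fun j hj => Set.indicator_of_notMem (hx j hj) _)]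
    simp

/-- change of variables: the restricted Lebesgue measure on `(c, c+a)` is the pushforward. -/
lemma restrict_eq_smul_map (c aa : ℝ) (ha : 0 < aa) :
    volume.restrict (Set.Ioo c (c + aa))
      = ENNReal.ofReal aa •
        Measure.map (fun y => aa * y + c) (volume.restrict (Set.Ioo (0 : ℝ) 1)) := by
  have hpre : (fun y : ℝ => aa * y + c) ⁻¹' Set.Ioo c (c + aa) = Set.Ioo 0 1 := by
    ext y
    simp only [Set.mem_preimage, Set.mem_Ioo]
    constructor
    · rintro ⟨h1, h2⟩
      constructor <;> nlinarith
    · rintro ⟨h1, h2⟩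
      constructor <;> nlinarith
  have hmeas : Measurable (fun y : ℝ => aa * y + c) :=
    (measurable_const_mul aa).add_const c
  rw [← hpre, ← Measure.restrict_map hmeas measurableSet_Ioo]
  have hmap : Measure.map (fun y : ℝ => aa * y + c) volume
      = ENNReal.ofReal aa⁻¹ • volume := by
    have : (fun y : ℝ => aa * y + c) = (· + c) ∘ (aa * ·) := rfl
    rw [this, ← Measure.map_map (measurable_add_const c) (measurable_const_mul aa),
      Real.map_volume_mul_left ha.ne', Measure.map_smul, map_add_right_eq_self volume c,
      abs_of_pos (inv_pos.mpr ha)]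
  rw [hmap, Measure.restrict_smul, smul_smul, ← ENNReal.ofReal_mul ha.le,
    mul_inv_cancel₀ ha.ne', ENNReal.ofReal_one, one_smul]

end aux

/-- the similarity operator `G` is a contraction on `L²[0,1]`
(w.r.t. the `L²` norm, written via `Real.sqrt` of the integral of the square)
if and only if `∑ a_k d_k² < 1`. -/
theorem stmt_7
    (n : ℕ) (hn : 1 < n) (a d β : ℕ → ℝ)
    (ha_pos : ∀ k ∈ Finset.Icc 1 n, 0 < a k)
    (ha_sum : ∑ k ∈ Finset.Icc 1 n, a k = 1) :
    (∃ q : ℝ, 0 ≤ q ∧ q < 1 ∧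
        ∀ f₁ f₂ : ℝ → ℝ,
          MemLp f₁ 2 (volume.restrict (Set.Ioo (0:ℝ) 1)) →
          MemLp f₂ 2 (volume.restrict (Set.Ioo (0:ℝ) 1)) →
          Real.sqrt (∫ x in Set.Ioo (0:ℝ) 1,
              (simOp n a d β f₁ x - simOp n a d β f₂ x) ^ 2) ≤
            q * Real.sqrt (∫ x in Set.Ioo (0:ℝ) 1, (f₁ x - f₂ x) ^ 2)) ↔
      ∑ k ∈ Finset.Icc 1 n, a k * d k ^ 2 < 1 := by
  set μ₀ := volume.restrict (Set.Ioo (0 : ℝ) 1) with hμ₀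
  set S := ∑ k ∈ Finset.Icc 1 n, a k * d k ^ 2 with hS
  have hS0 : 0 ≤ S := by
    apply Finset.sum_nonneg
    intro k hk
    exact mul_nonneg (ha_pos k hk).le (sq_nonneg _)
  -- The key identity
  have key : ∀ f₁ f₂ : ℝ → ℝ, MemLp f₁ 2 μ₀ → MemLp f₂ 2 μ₀ →
      (∫ x in Set.Ioo (0:ℝ) 1, (simOp n a d β f₁ x - simOp n a d β f₂ x) ^ 2)
        = S * ∫ x in Set.Ioo (0:ℝ) 1, (f₁ x - f₂ x) ^ 2 := by
    intro f₁ f₂ h₁ h₂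
    set g : ℝ → ℝ := fun x => f₁ x - f₂ x with hgdef
    have hg : MemLp g 2 μ₀ := h₁.sub h₂
    have hgsq : Integrable (fun x => g x ^ 2) μ₀ := hg.integrable_sq
    -- pointwise identity for the integrand
    have hpt : ∀ x, (simOp n a d β f₁ x - simOp n a d β f₂ x) ^ 2
        = ∑ k ∈ Finset.Icc 1 n,
            (Set.Ioo (partPt a k) (partPt a (k + 1))).indicator
              (fun t => (d k * g ((t - partPt a k) / a k)) ^ 2) x := by
      intro x
      have h1 : simOp n a d β f₁ x - simOp n a d β f₂ x
          = ∑ k ∈ Finset.Icc 1 n,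
              (Set.Ioo (partPt a k) (partPt a (k + 1))).indicator
                (fun t => d k * g ((t - partPt a k) / a k)) x := by
        unfold simOp
        rw [← Finset.sum_sub_distrib]
        refine Finset.sum_congr rfl fun k hk => ?_
        by_cases hx : x ∈ Set.Ioo (partPt a k) (partPt a (k + 1))
        · rw [Set.indicator_of_mem hx, Set.indicator_of_mem hx, Set.indicator_of_mem hx]
          simp only [hgdef]; ring
        · rw [Set.indicator_of_notMem hx, Set.indicator_of_notMem hx,
            Set.indicator_of_notMem hx, sub_zero]
      rw [h1]
      exact sq_sum_indicator _ _ (fun i hi j hj hij => partPt_disjoint n a ha_pos hi hj hij) _ x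
    rw [integral_congr_ae (Filter.Eventually.of_forall hpt)]
    -- integrability + value of each term
    have hterm : ∀ k ∈ Finset.Icc 1 n,
        (Integrable ((Set.Ioo (partPt a k) (partPt a (k + 1))).indicator
            (fun t => (d k * g ((t - partPt a k) / a k)) ^ 2)) μ₀) ∧
        (∫ x, (Set.Ioo (partPt a k) (partPt a (k + 1))).indicator
            (fun t => (d k * g ((t - partPt a k) / a k)) ^ 2) x ∂μ₀
          = a k * d k ^ 2 * ∫ y in Set.Ioo (0:ℝ) 1, g y ^ 2) := by
      intro k hk
      have hak : 0 < a k := ha_pos k hk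
      set c := partPt a k with hc
      have hsucc : partPt a (k + 1) = c + a k :=
        partPt_succ a (Finset.mem_Icc.mp hk).1
      set F : ℝ → ℝ := fun t => (d k * g ((t - c) / a k)) ^ 2 with hF
      set T : ℝ → ℝ := fun y => a k * y + c with hT
      have hemb : MeasurableEmbedding T :=
        (affineHomeomorph (a k) c hak.ne').measurableEmbedding
      have hcomp : (F ∘ T) = fun y => (d k * g y) ^ 2 := by
        funext y
        simp only [hF, hT, Function.comp_apply]
        rw [add_sub_cancel_right, mul_div_cancel_left₀ _ hak.ne']
      have hFcomp_int : Integrable (F ∘ T) μ₀ := by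
        rw [hcomp]
        have : (fun y => (d k * g y) ^ 2) = fun y => d k ^ 2 * g y ^ 2 := by
          funext y; ring
        rw [this]
        exact hgsq.const_mul _
      have hmeasr : volume.restrict (Set.Ioo c (c + a k))
          = ENNReal.ofReal (a k) • Measure.map T μ₀ := restrict_eq_smul_map c (a k) hak
      have hFint : IntegrableOn F (Set.Ioo c (c + a k)) volume := by
        rw [IntegrableOn, hmeasr]
        rw [integrable_smul_measure (by simp [hak]) (by simp)]
        rwa [hemb.integrable_map_iff]
      have hsub : Set.Ioo c (c + a k) ⊆ Set.Ioo (0:ℝ) 1 := by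
        rw [← hsucc]; exact partPt_subset n a ha_pos ha_sum hk
      have hrr : μ₀.restrict (Set.Ioo c (c + a k)) = volume.restrict (Set.Ioo c (c + a k)) := by
        rw [hμ₀, Measure.restrict_restrict measurableSet_Ioo, Set.inter_eq_left.mpr hsub]
      constructor
      · rw [hsucc, integrable_indicator_iff measurableSet_Ioo, IntegrableOn, hrr]
        exact hFint
      · rw [hsucc, integral_indicator measurableSet_Ioo]
        calc ∫ x in Set.Ioo c (c + a k), F x ∂μ₀
            = ∫ x, F x ∂(volume.restrict (Set.Ioo c (c + a k))) := by rw [hrr]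
          _ = ∫ x, F x ∂(ENNReal.ofReal (a k) • Measure.map T μ₀) := by rw [hmeasr]
          _ = a k * ∫ x, F x ∂(Measure.map T μ₀) := by
              rw [integral_smul_measure, ENNReal.toReal_ofReal hak.le, smul_eq_mul]
          _ = a k * ∫ y, (F ∘ T) y ∂μ₀ := by rw [hemb.integral_map]; rfl
          _ = a k * ∫ y, d k ^ 2 * g y ^ 2 ∂μ₀ := by
              rw [hcomp]
              congr 1
              apply integral_congr_ae (Filter.Eventually.of_forall fun y => ?_)
              ring
          _ = a k * (d k ^ 2 * ∫ y, g y ^ 2 ∂μ₀) := by rw [integral_const_mul]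
          _ = a k * d k ^ 2 * ∫ y in Set.Ioo (0:ℝ) 1, g y ^ 2 := by rw [hμ₀, mul_assoc]
    rw [integral_finset_sum _ (fun k hk => (hterm k hk).1),
      Finset.sum_congr rfl (fun k hk => (hterm k hk).2), ← Finset.sum_mul]
  constructor
  · rintro ⟨q, hq0, hq1, hbound⟩
    have hc1 : MemLp (fun _ : ℝ => (1:ℝ)) 2 μ₀ := memLp_const 1
    have hc0 : MemLp (fun _ : ℝ => (0:ℝ)) 2 μ₀ := memLp_const 0
    have hint1 : (∫ x in Set.Ioo (0:ℝ) 1, ((fun _ : ℝ => (1:ℝ)) x - (fun _ : ℝ => (0:ℝ)) x) ^ 2)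
        = 1 := by
      simp
    have hb := hbound _ _ hc1 hc0
    rw [key _ _ hc1 hc0, hint1, mul_one, Real.sqrt_one, mul_one] at hb
    have h2 : S = Real.sqrt S ^ 2 := (Real.sq_sqrt hS0).symm
    have h3 : Real.sqrt S ≤ q := hb
    nlinarith [Real.sqrt_nonneg S]
  · intro hS1
    refine ⟨Real.sqrt S, Real.sqrt_nonneg S, ?_, ?_⟩
    · have := Real.sqrt_lt_sqrt hS0 hS1
      rwa [Real.sqrt_one] at this
    · intro f₁ f₂ h₁ h₂
      rw [key f₁ f₂ h₁ h₂, Real.sqrt_mul hS0]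
end

section
/- Let n > 1 be an integer, let a_1,…,a_n be positive reals with ∑_{k=1}^n a_k = 1, and let d_1,…,d_n and β_1,…,β_n be reals with ∑_{k=1}^n a_k d_k² < 1; let G be the associated similarity operator on L²[0,1]. Then there exists a unique function f ∈ L²[0,1] satisfying G(f) = f. -/
open MeasureTheory

namespace Stmt8Aux

open Set
open scoped ENNReal

noncomputable def μ01 : Measure ℝ := volume.restrict (Ioo (0:ℝ) 1)

lemma map_affine (α c : ℝ) (hc : 0 < c) :
    Measure.map (fun x => (x - α) / c) (volume.restrict (Ioo α (α + c)))
      = ENNReal.ofReal c • μ01 := by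
  have hφ : (fun x : ℝ => (x - α) / c) = (fun y => c⁻¹ * y) ∘ (fun x => x + (-α)) := by
    funext x; simp [div_eq_inv_mul, sub_eq_add_neg]
  have hpre : (fun x : ℝ => (x - α) / c) ⁻¹' (Ioo 0 1) = Ioo α (α + c) := by
    ext x
    simp only [mem_preimage, mem_Ioo, lt_div_iff₀ hc, div_lt_iff₀ hc, zero_mul, one_mul]
    constructor
    · rintro ⟨h1, h2⟩; constructor <;> linarith
    · rintro ⟨h1, h2⟩; constructor <;> linarith
  have hmeas : Measurable (fun x : ℝ => (x - α) / c) := by fun_prop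
  have hmapvol : Measure.map (fun x : ℝ => (x - α) / c) volume
      = ENNReal.ofReal c • volume := by
    rw [hφ, ← Measure.map_map (by fun_prop) (by fun_prop)]
    rw [map_add_right_eq_self volume (-α)]
    rw [show (fun y : ℝ => c⁻¹ * y) = (c⁻¹ * ·) from rfl, Real.map_volume_mul_left (by positivity)]
    congr 1
    rw [inv_inv, abs_of_pos hc]
  rw [← hpre, ← Measure.restrict_map hmeas measurableSet_Ioo, hmapvol, Measure.restrict_smul]
  rfl

lemma qmp_affine (α c : ℝ) (hc : 0 < c) :
    Measure.QuasiMeasurePreserving (fun x => (x - α) / c)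
      (volume.restrict (Ioo α (α + c))) μ01 := by
  refine ⟨by fun_prop, ?_⟩
  rw [map_affine α c hc]
  exact Measure.smul_absolutelyContinuous

lemma mp_affine (α c : ℝ) (hc : 0 < c) :
    MeasurePreserving (fun x => (x - α) / c)
      (volume.restrict (Ioo α (α + c))) (ENNReal.ofReal c • μ01) :=
  ⟨by fun_prop, map_affine α c hc⟩

/-- change of variables for lintegral -/
lemma lintegral_affine (α c : ℝ) (hc : 0 < c) {F : ℝ → ℝ≥0∞} (hF : AEMeasurable F μ01) :
    ∫⁻ x in Ioo α (α + c), F ((x - α) / c) = ENNReal.ofReal c * ∫⁻ y, F y ∂μ01 := by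
  have h1 : AEMeasurable F (ENNReal.ofReal c • μ01) := by
    refine hF.mono' ?_
    exact Measure.smul_absolutelyContinuous
  calc ∫⁻ x in Ioo α (α + c), F ((x - α) / c)
      = ∫⁻ y, F y ∂(Measure.map (fun x => (x - α) / c) (volume.restrict (Ioo α (α + c)))) := by
        rw [lintegral_map' (by rwa [map_affine α c hc]) (by fun_prop)]
    _ = ∫⁻ y, F y ∂(ENNReal.ofReal c • μ01) := by rw [map_affine α c hc]
    _ = ENNReal.ofReal c * ∫⁻ y, F y ∂μ01 := lintegral_smul_measure _ _

lemma memLp_comp_affine (α c : ℝ) (hc : 0 < c) {f : ℝ → ℝ} (hf : MemLp f 2 μ01) :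
    MemLp (fun x => f ((x - α) / c)) 2 (volume.restrict (Ioo α (α + c))) := by
  have h1 : MemLp f 2 (ENNReal.ofReal c • μ01) := hf.smul_measure ENNReal.ofReal_ne_top
  exact h1.comp_measurePreserving (mp_affine α c hc)

variable {n : ℕ} {a : ℕ → ℝ}

lemma partPt_succ {k : ℕ} (hk : 1 ≤ k) : partPt a (k + 1) = partPt a k + a k := by
  unfold partPt
  rw [Finset.sum_Ico_succ_top hk]

lemma partPt_one : partPt a 1 = 0 := by simp [partPt]

lemma partPt_mono (ha_pos : ∀ k ∈ Finset.Icc 1 n, 0 < a k) {j k : ℕ}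
    (hjk : j ≤ k) (hk : k ≤ n + 1) : partPt a j ≤ partPt a k := by
  unfold partPt
  refine Finset.sum_le_sum_of_subset_of_nonneg (Finset.Ico_subset_Ico le_rfl hjk) ?_
  intro l hl _
  refine (ha_pos l ?_).le
  simp only [Finset.mem_Ico] at hl
  simp only [Finset.mem_Icc]
  omega

lemma partPt_last (ha_sum : ∑ k ∈ Finset.Icc 1 n, a k = 1) : partPt a (n + 1) = 1 := by
  unfold partPt
  rw [← Finset.Ico_add_one_right_eq_Icc] at ha_sum
  exact ha_sum

lemma Ioo_subset (ha_pos : ∀ k ∈ Finset.Icc 1 n, 0 < a k)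
    (ha_sum : ∑ k ∈ Finset.Icc 1 n, a k = 1) {k : ℕ} (hk : k ∈ Finset.Icc 1 n) :
    Ioo (partPt a k) (partPt a (k + 1)) ⊆ Ioo (0:ℝ) 1 := by
  simp only [Finset.mem_Icc] at hk
  have h0 : (0:ℝ) ≤ partPt a k := by
    rw [← partPt_one (a := a)]
    exact partPt_mono ha_pos hk.1 (by omega)
  have h1 : partPt a (k + 1) ≤ 1 := by
    rw [← partPt_last ha_sum]
    exact partPt_mono ha_pos (by omega) le_rfl
  exact Ioo_subset_Ioo h0 h1

lemma Ioo_disjoint (ha_pos : ∀ k ∈ Finset.Icc 1 n, 0 < a k) {j k : ℕ}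
    (hj : j ∈ Finset.Icc 1 n) (hk : k ∈ Finset.Icc 1 n) (hjk : j ≠ k) :
    Disjoint (Ioo (partPt a j) (partPt a (j + 1))) (Ioo (partPt a k) (partPt a (k + 1))) := by
  simp only [Finset.mem_Icc] at hj hk
  rcases lt_or_gt_of_ne hjk with h | h
  · have : partPt a (j + 1) ≤ partPt a k := partPt_mono ha_pos (by omega) (by omega)
    rw [Set.disjoint_left]
    rintro x ⟨_, hx2⟩ ⟨hx3, _⟩
    linarith
  · have : partPt a (k + 1) ≤ partPt a j := partPt_mono ha_pos (by omega) (by omega)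
    rw [Set.disjoint_left]
    rintro x ⟨hx1, _⟩ ⟨_, hx4⟩
    linarith

lemma enorm_sq_sum_indicator {ι : Type*} (S : Finset ι) (s : ι → Set ℝ) (F : ι → ℝ → ℝ)
    (hdisj : ∀ j ∈ S, ∀ k ∈ S, j ≠ k → Disjoint (s j) (s k)) (x : ℝ) :
    ((‖∑ k ∈ S, (s k).indicator (F k) x‖₊ : ℝ≥0∞)) ^ 2
      = ∑ k ∈ S, ((‖(s k).indicator (F k) x‖₊ : ℝ≥0∞)) ^ 2 := by
  by_cases hx : ∃ k₀ ∈ S, x ∈ s k₀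
  · obtain ⟨k₀, hk₀S, hk₀⟩ := hx
    have hz : ∀ k ∈ S, k ≠ k₀ → (s k).indicator (F k) x = 0 := by
      intro k hk hne
      exact indicator_of_notMem (Set.disjoint_right.1 (hdisj k hk k₀ hk₀S hne) hk₀) _
    rw [Finset.sum_eq_single_of_mem k₀ hk₀S hz,
      Finset.sum_eq_single_of_mem k₀ hk₀S (fun k hk hne => by rw [hz k hk hne]; simp)]
  · push_neg at hx
    have hz : ∀ k ∈ S, (s k).indicator (F k) x = 0 := fun k hk =>
      indicator_of_notMem (hx k hk) _
    rw [Finset.sum_eq_zero hz, Finset.sum_eq_zero (fun k hk => by rw [hz k hk]; simp)]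
    simp

lemma restrict_eq (ha_pos : ∀ k ∈ Finset.Icc 1 n, 0 < a k)
    (ha_sum : ∑ k ∈ Finset.Icc 1 n, a k = 1) {k : ℕ} (hk : k ∈ Finset.Icc 1 n) :
    μ01.restrict (Ioo (partPt a k) (partPt a (k + 1)))
      = volume.restrict (Ioo (partPt a k) (partPt a (k + 1))) := by
  unfold μ01
  rw [Measure.restrict_restrict measurableSet_Ioo,
    Set.inter_eq_left.2 (Ioo_subset ha_pos ha_sum hk)]

/-- The key L² computation: the squared L² norm of the "difference part" of the operator. -/
lemma key_lintegral (ha_pos : ∀ k ∈ Finset.Icc 1 n, 0 < a k)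
    (ha_sum : ∑ k ∈ Finset.Icc 1 n, a k = 1) (d : ℕ → ℝ) {f : ℝ → ℝ}
    (hf : AEMeasurable f μ01) :
    ∫⁻ x, ((‖∑ k ∈ Finset.Icc 1 n, (Ioo (partPt a k) (partPt a (k + 1))).indicator
        (fun t => d k * f ((t - partPt a k) / a k)) x‖₊ : ℝ≥0∞)) ^ 2 ∂μ01
      = ENNReal.ofReal (∑ k ∈ Finset.Icc 1 n, a k * d k ^ 2)
          * ∫⁻ y, ((‖f y‖₊ : ℝ≥0∞)) ^ 2 ∂μ01 := by
  set I : ℕ → Set ℝ := fun k => Ioo (partPt a k) (partPt a (k + 1)) with hI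
  have hqmp : ∀ k ∈ Finset.Icc 1 n,
      Measure.QuasiMeasurePreserving (fun x => (x - partPt a k) / a k)
        (volume.restrict (I k)) μ01 := by
    intro k hk
    have h1 : 1 ≤ k := (Finset.mem_Icc.1 hk).1
    have e : I k = Ioo (partPt a k) (partPt a k + a k) := by
      show Ioo (partPt a k) (partPt a (k + 1)) = _
      rw [partPt_succ h1]
    rw [e]
    exact qmp_affine (partPt a k) (a k) (ha_pos k hk)
  have hcomp : ∀ k ∈ Finset.Icc 1 n,
      AEMeasurable (fun t => d k * f ((t - partPt a k) / a k)) (volume.restrict (I k)) := by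
    intro k hk
    exact (hf.comp_quasiMeasurePreserving (hqmp k hk)).const_mul _
  -- pointwise: disjoint supports
  have hpt : ∀ x, ((‖∑ k ∈ Finset.Icc 1 n, (I k).indicator
        (fun t => d k * f ((t - partPt a k) / a k)) x‖₊ : ℝ≥0∞)) ^ 2
      = ∑ k ∈ Finset.Icc 1 n, ((‖(I k).indicator
        (fun t => d k * f ((t - partPt a k) / a k)) x‖₊ : ℝ≥0∞)) ^ 2 := by
    intro x
    exact enorm_sq_sum_indicator _ _ _ (fun j hj k hk hjk => Ioo_disjoint ha_pos hj hk hjk) x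
  rw [lintegral_congr hpt]
  -- indicator through nnnorm-square
  have hind : ∀ k, (fun x => ((‖(I k).indicator
        (fun t => d k * f ((t - partPt a k) / a k)) x‖₊ : ℝ≥0∞)) ^ 2)
      = (I k).indicator (fun t => ((‖d k * f ((t - partPt a k) / a k)‖₊ : ℝ≥0∞)) ^ 2) := by
    intro k
    funext x
    by_cases hx : x ∈ I k
    · simp [indicator_of_mem hx]
    · simp [indicator_of_notMem hx]
  have hmeas : ∀ k ∈ Finset.Icc 1 n, AEMeasurable (fun x => ((‖(I k).indicator
        (fun t => d k * f ((t - partPt a k) / a k)) x‖₊ : ℝ≥0∞)) ^ 2) μ01 := by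
    intro k hk
    rw [hind k]
    rw [aemeasurable_indicator_iff measurableSet_Ioo]
    rw [restrict_eq ha_pos ha_sum hk]
    exact (((hcomp k hk).nnnorm).coe_nnreal_ennreal).pow_const 2
  rw [lintegral_finset_sum' _ hmeas]
  have hterm : ∀ k ∈ Finset.Icc 1 n,
      ∫⁻ x, ((‖(I k).indicator (fun t => d k * f ((t - partPt a k) / a k)) x‖₊ : ℝ≥0∞)) ^ 2 ∂μ01
        = ENNReal.ofReal (a k * d k ^ 2) * ∫⁻ y, ((‖f y‖₊ : ℝ≥0∞)) ^ 2 ∂μ01 := by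
    intro k hk
    have h1 : 1 ≤ k := (Finset.mem_Icc.1 hk).1
    have hFa : AEMeasurable (fun y => ((‖d k * f y‖₊ : ℝ≥0∞)) ^ 2) μ01 :=
      (((hf.const_mul _).nnnorm).coe_nnreal_ennreal).pow_const 2
    rw [hind k, lintegral_indicator measurableSet_Ioo, restrict_eq ha_pos ha_sum hk]
    rw [show Ioo (partPt a k) (partPt a (k + 1)) = Ioo (partPt a k) (partPt a k + a k) from
      by rw [partPt_succ h1]]
    rw [show (∫⁻ x in Ioo (partPt a k) (partPt a k + a k),
        ((‖d k * f ((x - partPt a k) / a k)‖₊ : ℝ≥0∞)) ^ 2 ∂volume)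
      = ENNReal.ofReal (a k) * ∫⁻ y, ((‖d k * f y‖₊ : ℝ≥0∞)) ^ 2 ∂μ01 from
      lintegral_affine _ _ (ha_pos k hk) hFa]
    have hdk : ∀ y, ((‖d k * f y‖₊ : ℝ≥0∞)) ^ 2
        = ENNReal.ofReal (d k ^ 2) * ((‖f y‖₊ : ℝ≥0∞)) ^ 2 := by
      intro y
      rw [nnnorm_mul, ENNReal.coe_mul, mul_pow, ← ENNReal.coe_pow]
      congr 1
      rw [ENNReal.ofReal, ENNReal.coe_inj]
      ext
      push_cast
      rw [Real.coe_toNNReal _ (sq_nonneg _)]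
      simp [Real.norm_eq_abs, sq_abs]
    rw [lintegral_congr hdk, lintegral_const_mul'' _ (((hf.nnnorm).coe_nnreal_ennreal).pow_const 2)]
    rw [← mul_assoc, ← ENNReal.ofReal_mul (ha_pos k hk).le]
  rw [Finset.sum_congr rfl hterm, ← Finset.sum_mul]
  congr 1
  rw [← ENNReal.ofReal_sum_of_nonneg]
  intro k hk
  exact mul_nonneg (ha_pos k hk).le (sq_nonneg _)

lemma simOp_eq_sum (n : ℕ) (a d β : ℕ → ℝ) (f : ℝ → ℝ) :
    simOp n a d β f = ∑ k ∈ Finset.Icc 1 n,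
      (Ioo (partPt a k) (partPt a (k + 1))).indicator
        (fun t => β k + d k * f ((t - partPt a k) / a k)) := by
  funext x
  rw [simOp, Finset.sum_apply]

lemma simOp_memLp (ha_pos : ∀ k ∈ Finset.Icc 1 n, 0 < a k)
    (ha_sum : ∑ k ∈ Finset.Icc 1 n, a k = 1) (d β : ℕ → ℝ) {f : ℝ → ℝ}
    (hf : MemLp f 2 μ01) : MemLp (simOp n a d β f) 2 μ01 := by
  rw [simOp_eq_sum]
  refine memLp_finset_sum' _ fun k hk => ?_
  have h1 : 1 ≤ k := (Finset.mem_Icc.1 hk).1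
  rw [memLp_indicator_iff_restrict measurableSet_Ioo, restrict_eq ha_pos ha_sum hk,
    partPt_succ h1]
  have := (memLp_comp_affine (partPt a k) _ (ha_pos k hk) hf).const_mul (d k)
  have h2 : MemLp (fun _ : ℝ => β k) 2 (volume.restrict (Ioo (partPt a k) (partPt a k + a k))) := memLp_const _
  exact h2.add this

lemma simOp_congr (ha_pos : ∀ k ∈ Finset.Icc 1 n, 0 < a k)
    (ha_sum : ∑ k ∈ Finset.Icc 1 n, a k = 1) (d β : ℕ → ℝ) {f g : ℝ → ℝ}
    (hfg : f =ᵐ[μ01] g) : simOp n a d β f =ᵐ[μ01] simOp n a d β g := by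
  rw [simOp_eq_sum, simOp_eq_sum]
  refine eventuallyEq_sum fun k hk => ?_
  have h1 : 1 ≤ k := (Finset.mem_Icc.1 hk).1
  have hIoo : Ioo (partPt a k) (partPt a (k + 1))
      = Ioo (partPt a k) (partPt a k + a k) := by rw [partPt_succ h1]
  have hq := qmp_affine (partPt a k) (a k) (ha_pos k hk)
  have hcomp := hq.ae_eq hfg
  have hinner : (fun t => β k + d k * f ((t - partPt a k) / a k))
      =ᵐ[volume.restrict (Ioo (partPt a k) (partPt a k + a k))]
      (fun t => β k + d k * g ((t - partPt a k) / a k)) := by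
    filter_upwards [hcomp] with t ht
    simp only [Function.comp_apply] at ht
    rw [ht]
  have h2 : ∀ᵐ x ∂volume, x ∈ Ioo (partPt a k) (partPt a k + a k) →
      β k + d k * f ((x - partPt a k) / a k) = β k + d k * g ((x - partPt a k) / a k) :=
    (ae_restrict_iff' measurableSet_Ioo).1 hinner
  have hac : μ01 ≪ volume := Measure.absolutelyContinuous_of_le Measure.restrict_le_self
  have h3 := hac.ae_le h2
  rw [hIoo]
  filter_upwards [h3] with x hx
  by_cases hxs : x ∈ Ioo (partPt a k) (partPt a k + a k)
  · rw [indicator_of_mem hxs, indicator_of_mem hxs, hx hxs]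
  · rw [indicator_of_notMem hxs, indicator_of_notMem hxs]

lemma simOp_sub (n : ℕ) (a d β : ℕ → ℝ) (f g : ℝ → ℝ) :
    simOp n a d β f - simOp n a d β g
      = fun x => ∑ k ∈ Finset.Icc 1 n, (Ioo (partPt a k) (partPt a (k + 1))).indicator
          (fun t => d k * ((f - g) ((t - partPt a k) / a k))) x := by
  funext x
  simp only [Pi.sub_apply, simOp, ← Finset.sum_sub_distrib]
  refine Finset.sum_congr rfl fun k hk => ?_
  by_cases hx : x ∈ Ioo (partPt a k) (partPt a (k + 1))
  · simp only [indicator_of_mem hx, Pi.sub_apply]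
    ring
  · simp [indicator_of_notMem hx]

end Stmt8Aux

open Stmt8Aux Set
open scoped ENNReal NNReal

/-- if `∑ a_k d_k² < 1` then the similarity operator `G` has a unique
fixed point in `L²[0,1]` (uniqueness up to a.e. equality on `(0,1)`). -/
theorem stmt_8
    (n : ℕ) (hn : 1 < n) (a d β : ℕ → ℝ)
    (ha_pos : ∀ k ∈ Finset.Icc 1 n, 0 < a k)
    (ha_sum : ∑ k ∈ Finset.Icc 1 n, a k = 1)
    (hcontr : ∑ k ∈ Finset.Icc 1 n, a k * d k ^ 2 < 1) :
    ∃ f : ℝ → ℝ, MemLp f 2 (volume.restrict (Set.Ioo (0:ℝ) 1)) ∧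
      simOp n a d β f =ᵐ[volume.restrict (Set.Ioo (0:ℝ) 1)] f ∧
      ∀ g : ℝ → ℝ, MemLp g 2 (volume.restrict (Set.Ioo (0:ℝ) 1)) →
        simOp n a d β g =ᵐ[volume.restrict (Set.Ioo (0:ℝ) 1)] g →
        g =ᵐ[volume.restrict (Set.Ioo (0:ℝ) 1)] f := by
  have hμ : volume.restrict (Set.Ioo (0:ℝ) 1) = μ01 := rfl
  rw [hμ]
  set S : ℝ := ∑ k ∈ Finset.Icc 1 n, a k * d k ^ 2 with hS
  have hS0 : 0 ≤ S := Finset.sum_nonneg fun k hk => mul_nonneg (ha_pos k hk).le (sq_nonneg _)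
  set K : ℝ≥0 := Real.toNNReal (Real.sqrt S) with hK
  have hK1 : K < 1 := by
    rw [hK, ← Real.toNNReal_one]
    rw [Real.toNNReal_lt_toNNReal_iff one_pos]
    calc Real.sqrt S < Real.sqrt 1 := Real.sqrt_lt_sqrt hS0 hcontr
      _ = 1 := Real.sqrt_one
  -- key eLpNorm estimate
  have hp2 : ∀ h : ℝ → ℝ, eLpNorm h 2 μ01
      = (∫⁻ x, ((‖h x‖₊ : ℝ≥0∞)) ^ 2 ∂μ01) ^ (1/2 : ℝ) := by
    intro h
    rw [eLpNorm_eq_lintegral_rpow_enorm_toReal two_ne_zero ENNReal.ofNat_ne_top]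
    have h2r : (2 : ℝ≥0∞).toReal = (2:ℝ) := by simp
    rw [h2r]
    have hnp : ∀ x : ℝ≥0∞, x ^ (2:ℝ) = x ^ (2:ℕ) := fun x => by
      rw [show ((2:ℝ)) = ((2:ℕ):ℝ) by norm_num, ENNReal.rpow_natCast]
    simp_rw [hnp]
    rfl
  have hest : ∀ f g : ℝ → ℝ, AEMeasurable f μ01 → AEMeasurable g μ01 →
      eLpNorm (simOp n a d β f - simOp n a d β g) 2 μ01
        ≤ (K : ℝ≥0∞) * eLpNorm (f - g) 2 μ01 := by
    intro f g hfm hgm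
    rw [hp2, hp2, simOp_sub]
    rw [lintegral_congr fun x => rfl]
    have hkey := key_lintegral ha_pos ha_sum d (f := f - g) (hfm.sub hgm)
    rw [show (∫⁻ x, ((‖∑ k ∈ Finset.Icc 1 n, (Ioo (partPt a k) (partPt a (k + 1))).indicator
        (fun t => d k * ((f - g) ((t - partPt a k) / a k))) x‖₊ : ℝ≥0∞)) ^ 2 ∂μ01)
      = ENNReal.ofReal S * ∫⁻ y, ((‖(f - g) y‖₊ : ℝ≥0∞)) ^ 2 ∂μ01 from hkey]
    rw [ENNReal.mul_rpow_of_nonneg _ _ (by norm_num : (0:ℝ) ≤ 1/2)]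
    apply mul_le_mul_left
    rw [ENNReal.ofReal_rpow_of_nonneg hS0 (by norm_num : (0:ℝ) ≤ 1/2)]
    rw [← Real.sqrt_eq_rpow]
    exact le_of_eq rfl
  -- the operator on L²
  have hmem : ∀ h : ℝ → ℝ, MemLp h 2 μ01 → MemLp (simOp n a d β h) 2 μ01 :=
    fun h hh => simOp_memLp ha_pos ha_sum d β hh
  let Φ : Lp ℝ 2 μ01 → Lp ℝ 2 μ01 :=
    fun F => MemLp.toLp _ (hmem F (Lp.memLp F))
  have hΦcoe : ∀ F : Lp ℝ 2 μ01, (Φ F : ℝ → ℝ) =ᵐ[μ01] simOp n a d β F :=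
    fun F => MemLp.coeFn_toLp _
  have hlip : LipschitzWith K Φ := by
    intro F G
    rw [Lp.edist_def, Lp.edist_def]
    have h1 : (⇑(Φ F) - ⇑(Φ G) : ℝ → ℝ) =ᵐ[μ01] simOp n a d β F - simOp n a d β G := by
      filter_upwards [hΦcoe F, hΦcoe G] with x hx1 hx2
      simp [hx1, hx2]
    rw [eLpNorm_congr_ae h1]
    exact hest _ _ ((Lp.memLp F).aestronglyMeasurable.aemeasurable)
      ((Lp.memLp G).aestronglyMeasurable.aemeasurable)
  have hcw : ContractingWith K Φ := ⟨hK1, hlip⟩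
  have : Nonempty (Lp ℝ 2 μ01) := ⟨0⟩
  let F₀ : Lp ℝ 2 μ01 := ContractingWith.fixedPoint Φ hcw
  have hfix : Function.IsFixedPt Φ F₀ := ContractingWith.fixedPoint_isFixedPt hcw
  refine ⟨F₀, Lp.memLp F₀, ?_, ?_⟩
  · -- simOp F₀ =ᵐ F₀
    have h1 : (⇑(Φ F₀) : ℝ → ℝ) =ᵐ[μ01] simOp n a d β F₀ := hΦcoe F₀
    have h2 : Φ F₀ = F₀ := hfix
    calc simOp n a d β F₀ =ᵐ[μ01] ⇑(Φ F₀) := h1.symm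
      _ = ⇑F₀ := by rw [h2]
  · intro g hg hgfix
    set G : Lp ℝ 2 μ01 := MemLp.toLp g hg with hG
    have hGcoe : (⇑G : ℝ → ℝ) =ᵐ[μ01] g := MemLp.coeFn_toLp hg
    have hGfix : Function.IsFixedPt Φ G := by
      apply Lp.ext
      calc (⇑(Φ G) : ℝ → ℝ) =ᵐ[μ01] simOp n a d β G := hΦcoe G
        _ =ᵐ[μ01] simOp n a d β g := simOp_congr ha_pos ha_sum d β hGcoe
        _ =ᵐ[μ01] g := hgfix
        _ =ᵐ[μ01] ⇑G := hGcoe.symm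
    have hGF : G = F₀ := ContractingWith.fixedPoint_unique hcw hGfix
    calc g =ᵐ[μ01] ⇑G := hGcoe.symm
      _ = ⇑F₀ := by rw [hGF]
end

section
/- Let n > 1 be an integer, let a_1,…,a_n be positive reals with ∑_{k=1}^n a_k = 1, and let d_1,…,d_n be reals with ∑_{k=1}^n a_k d_k² < 1 such that at least two of the numbers d_1,…,d_n are nonzero. Then there exists a unique positive real D satisfying ∑_{k=1}^n (a_k |d_k|)^{D/2} = 1 (where summands with d_k = 0 are taken to be 0), and this D satisfies D < 2. -/
/-- existence, uniqueness and bound for the spectral order.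
The power `(a_k |d_k|)^(D/2)` is `Real.rpow`; for `d_k = 0` and `D > 0` it equals `0`,
as required. -/
theorem stmt_9
    (n : ℕ) (hn : 1 < n) (a d : ℕ → ℝ)
    (ha_pos : ∀ k ∈ Finset.Icc 1 n, 0 < a k)
    (ha_sum : ∑ k ∈ Finset.Icc 1 n, a k = 1)
    (hcontr : ∑ k ∈ Finset.Icc 1 n, a k * d k ^ 2 < 1)
    (htwo : ∃ k₁ ∈ Finset.Icc 1 n, ∃ k₂ ∈ Finset.Icc 1 n,
      k₁ ≠ k₂ ∧ d k₁ ≠ 0 ∧ d k₂ ≠ 0) :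
    (∃! D : ℝ, 0 < D ∧ ∑ k ∈ Finset.Icc 1 n, (a k * |d k|) ^ (D / 2) = 1) ∧
    ∀ D : ℝ, 0 < D → ∑ k ∈ Finset.Icc 1 n, (a k * |d k|) ^ (D / 2) = 1 → D < 2 := by
  obtain ⟨k₁, hk₁, k₂, hk₂, hne, hd₁, hd₂⟩ := htwo
  set t : ℕ → ℝ := fun k => a k * |d k| with ht_def
  set S : Finset ℕ := (Finset.Icc 1 n).filter (fun k => d k ≠ 0) with hS
  have hk₁S : k₁ ∈ S := Finset.mem_filter.2 ⟨hk₁, hd₁⟩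
  have hk₂S : k₂ ∈ S := Finset.mem_filter.2 ⟨hk₂, hd₂⟩
  have htpos : ∀ k ∈ S, 0 < t k := by
    intro k hk
    obtain ⟨hk', hd⟩ := Finset.mem_filter.1 hk
    exact mul_pos (ha_pos k hk') (abs_pos.2 hd)
  have ha_le : ∀ k ∈ Finset.Icc 1 n, a k ≤ 1 := by
    intro k hk
    calc a k ≤ ∑ j ∈ Finset.Icc 1 n, a j :=
          Finset.single_le_sum (fun j hj => (ha_pos j hj).le) hk
      _ = 1 := ha_sum
  have hterm_lt : ∀ k ∈ Finset.Icc 1 n, a k * d k ^ 2 < 1 := by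
    intro k hk
    calc a k * d k ^ 2 ≤ ∑ j ∈ Finset.Icc 1 n, a j * d j ^ 2 :=
          Finset.single_le_sum (fun j hj => mul_nonneg (ha_pos j hj).le (sq_nonneg _)) hk
      _ < 1 := hcontr
  have htlt : ∀ k ∈ S, t k < 1 := by
    intro k hk
    obtain ⟨hk', hd⟩ := Finset.mem_filter.1 hk
    have h1 := ha_le k hk'
    have h2 := hterm_lt k hk'
    have h3 := ha_pos k hk'
    have h5 : 0 < t k := htpos k hk
    have hsq : t k ^ 2 = a k * (a k * d k ^ 2) := by
      simp only [ht_def]; rw [mul_pow, sq_abs]; ring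
    nlinarith [sq_nonneg (d k)]
  -- the reduced function
  set g : ℝ → ℝ := fun D => ∑ k ∈ S, t k ^ (D / 2) with hg_def
  have hsum_eq : ∀ D : ℝ, 0 < D →
      ∑ k ∈ Finset.Icc 1 n, t k ^ (D / 2) = g D := by
    intro D hD
    rw [hg_def, hS]
    symm
    apply Finset.sum_filter_of_ne
    intro k hk h
    by_contra hd
    apply h
    have : t k = 0 := by simp [ht_def, hd]
    rw [this, Real.zero_rpow (by positivity : D / 2 ≠ 0)]
  have hanti : StrictAnti g := by
    intro x y hxy
    apply Finset.sum_lt_sum_of_nonempty ⟨k₁, hk₁S⟩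
    intro k hk
    exact Real.rpow_lt_rpow_of_exponent_gt (htpos k hk) (htlt k hk) (by linarith)
  have hcont : Continuous g := by
    apply continuous_finset_sum
    intro k hk
    have : Continuous fun x : ℝ => t k ^ x := by
      rw [continuous_iff_continuousAt]
      intro x
      exact Real.continuousAt_const_rpow (ne_of_gt (htpos k hk))
    exact this.comp (continuous_id.div_const 2)
  have hg0 : 2 ≤ g 0 := by
    have hcard : 1 < S.card := Finset.one_lt_card.2 ⟨k₁, hk₁S, k₂, hk₂S, hne⟩
    have : g 0 = S.card := by
      simp [hg_def, Real.rpow_zero]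
    rw [this]
    exact_mod_cast hcard
  have hsum_t_lt : ∑ k ∈ Finset.Icc 1 n, t k < 1 := by
    have h := Finset.sum_mul_sq_le_sq_mul_sq (Finset.Icc 1 n)
      (fun k => Real.sqrt (a k)) (fun k => Real.sqrt (a k) * |d k|)
    have e1 : ∑ k ∈ Finset.Icc 1 n, Real.sqrt (a k) * (Real.sqrt (a k) * |d k|)
        = ∑ k ∈ Finset.Icc 1 n, t k := by
      apply Finset.sum_congr rfl
      intro k hk
      rw [← mul_assoc, Real.mul_self_sqrt (ha_pos k hk).le]
    have e2 : ∑ k ∈ Finset.Icc 1 n, Real.sqrt (a k) ^ 2 = 1 := by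
      rw [← ha_sum]
      exact Finset.sum_congr rfl fun k hk => Real.sq_sqrt (ha_pos k hk).le
    have e3 : ∑ k ∈ Finset.Icc 1 n, (Real.sqrt (a k) * |d k|) ^ 2
        = ∑ k ∈ Finset.Icc 1 n, a k * d k ^ 2 := by
      apply Finset.sum_congr rfl
      intro k hk
      rw [mul_pow, Real.sq_sqrt (ha_pos k hk).le, sq_abs]
    rw [e1, e2, e3, one_mul] at h
    have hnn : 0 ≤ ∑ k ∈ Finset.Icc 1 n, t k :=
      Finset.sum_nonneg fun k hk => mul_nonneg (ha_pos k hk).le (abs_nonneg _)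
    nlinarith
  have hg2 : g 2 < 1 := by
    have : g 2 = ∑ k ∈ S, t k := by
      apply Finset.sum_congr rfl
      intro k hk
      norm_num
    rw [this]
    calc ∑ k ∈ S, t k ≤ ∑ k ∈ Finset.Icc 1 n, t k := by
          apply Finset.sum_le_sum_of_subset_of_nonneg (Finset.filter_subset _ _)
          intro k hk _
          exact mul_nonneg (ha_pos k hk).le (abs_nonneg _)
      _ < 1 := hsum_t_lt
  -- IVT
  have hivt : ∃ D ∈ Set.Icc (0 : ℝ) 2, g D = 1 := by
    have h := intermediate_value_Icc' (by norm_num : (0:ℝ) ≤ 2) hcont.continuousOn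
    have h1 : (1 : ℝ) ∈ Set.Icc (g 2) (g 0) := ⟨hg2.le, by linarith⟩
    obtain ⟨D, hD, hDval⟩ := h h1
    exact ⟨D, hD, hDval⟩
  obtain ⟨D, ⟨hD0, hD2⟩, hDval⟩ := hivt
  have hD0' : 0 < D := by
    rcases lt_or_eq_of_le hD0 with h | h
    · exact h
    · exfalso; rw [← h] at hDval; linarith
  have hD2' : D < 2 := by
    rcases lt_or_eq_of_le hD2 with h | h
    · exact h
    · exfalso; rw [h] at hDval; linarith
  constructor
  · refine ⟨D, ⟨hD0', by rw [hsum_eq D hD0']; exact hDval⟩, ?_⟩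
    intro D' ⟨hD'0, hD'val⟩
    rw [hsum_eq D' hD'0] at hD'val
    exact hanti.injective (by rw [hD'val, hDval])
  · intro E hE hEval
    rw [hsum_eq E hE] at hEval
    have : g 2 < g E := by rw [hEval]; exact hg2
    exact hanti.lt_iff_gt.1 this
end

section
/- For a ∈ (0, 1/3) set q_a = a(1 − 2a)/(2 − 5a). Then q_a ∈ (0, 1/3), the unique positive real D_a satisfying 3 · q_a^{D_a/2} = 1 is given by D_a = ln 9 / (ln(2 − 5a) − ln a − ln(1 − 2a)), one has D_a < 2 for every a ∈ (0,1/3), and D_a → 2 as a → 1/3 from the left. (This is the spectral order of the self-similar function P̃_a with parameters n = 3, a_1 = a_3 = a, a_2 = 1 − 2a, d_1 = d_3 = 1/2 + δ, d_2 = −2δ, where δ is determined by (2 − 5a)δ = a/2; for these parameters a_1|d_1| = a_2|d_2| = a_3|d_3| = q_a.) -/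
open Filter

/-- `q_a = a(1-2a)/(2-5a)`, the common value `a_k |d_k|` for the parameters of `P̃_a`. -/
noncomputable def qfun (a : ℝ) : ℝ := a * (1 - 2 * a) / (2 - 5 * a)

/-- `D_a = ln 9 / (ln(2-5a) - ln a - ln(1-2a))`, the spectral order of `P̃_a`. -/
noncomputable def Dfun (a : ℝ) : ℝ :=
  Real.log 9 / (Real.log (2 - 5 * a) - Real.log a - Real.log (1 - 2 * a))

/-- properties of the spectral order `D_a` of the self-similar
function `P̃_a`.  With `δ = a/(2(2-5a))` one indeed has
`a_1|d_1| = a_2|d_2| = a_3|d_3| = q_a`; `q_a ∈ (0,1/3)`; `D_a` is the unique positive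
root of `3 q_a^{D/2} = 1`; `D_a < 2`; and `D_a → 2` as `a ↗ 1/3`. -/
theorem stmt_18 :
    (∀ a ∈ Set.Ioo (0:ℝ) (1/3),
      a * (1/2 + a / (2 * (2 - 5 * a))) = qfun a ∧
      (1 - 2 * a) * |(-(2 * (a / (2 * (2 - 5 * a)))))| = qfun a) ∧
    (∀ a ∈ Set.Ioo (0:ℝ) (1/3), qfun a ∈ Set.Ioo (0:ℝ) (1/3)) ∧
    (∀ a ∈ Set.Ioo (0:ℝ) (1/3),
      ∃! D : ℝ, 0 < D ∧ 3 * qfun a ^ (D / 2) = 1) ∧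
    (∀ a ∈ Set.Ioo (0:ℝ) (1/3),
      0 < Dfun a ∧ 3 * qfun a ^ (Dfun a / 2) = 1) ∧
    (∀ a ∈ Set.Ioo (0:ℝ) (1/3), Dfun a < 2) ∧
    Tendsto Dfun (nhdsWithin (1/3 : ℝ) (Set.Iio (1/3))) (nhds 2) := by
  have h9 : Real.log 9 = 2 * Real.log 3 := by
    rw [show (9:ℝ) = 3^2 by norm_num, Real.log_pow]; push_cast; ring
  -- basic facts
  have key : ∀ a ∈ Set.Ioo (0:ℝ) (1/3),
      0 < qfun a ∧ qfun a < 1/3 ∧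
      Real.log (2 - 5*a) - Real.log a - Real.log (1 - 2*a) = -Real.log (qfun a) := by
    rintro a ⟨ha0, ha1⟩
    have h1 : 0 < 1 - 2*a := by linarith
    have h2 : 0 < 2 - 5*a := by linarith
    have hq0 : 0 < qfun a := by unfold qfun; positivity
    refine ⟨hq0, ?_, ?_⟩
    · rw [qfun, div_lt_iff₀ h2]; nlinarith
    · rw [qfun, Real.log_div (by positivity) (by positivity),
        Real.log_mul ha0.ne' h1.ne']
      ring
  -- part 4 first
  have part4 : ∀ a ∈ Set.Ioo (0:ℝ) (1/3),
      0 < Dfun a ∧ 3 * qfun a ^ (Dfun a / 2) = 1 := by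
    intro a ha
    obtain ⟨hq0, hq1, hL⟩ := key a ha
    have hlq : Real.log (qfun a) < 0 := Real.log_neg hq0 (by linarith)
    have hLpos : 0 < Real.log (2 - 5*a) - Real.log a - Real.log (1 - 2*a) := by
      rw [hL]; linarith
    have hD0 : 0 < Dfun a := div_pos (Real.log_pos (by norm_num)) hLpos
    refine ⟨hD0, ?_⟩
    have hexp : Real.log (qfun a) * (Dfun a / 2) = -Real.log 3 := by
      rw [Dfun, hL, h9]
      field_simp [hlq.ne]
    rw [Real.rpow_def_of_pos hq0, hexp, Real.exp_neg, Real.exp_log (by norm_num : (0:ℝ) < 3)]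
    norm_num
  refine ⟨?_, ?_, ?_, part4, ?_, ?_⟩
  · rintro a ⟨ha0, ha1⟩
    have h1 : 0 < 1 - 2*a := by linarith
    have h2 : 0 < 2 - 5*a := by linarith
    constructor
    · rw [qfun, div_eq_mul_inv, div_eq_mul_inv, mul_inv, eq_comm]; linear_combination (a/2) * (mul_inv_cancel₀ h2.ne')
    · rw [abs_neg, abs_of_nonneg (by positivity), qfun]; field_simp
  · intro a ha
    obtain ⟨hq0, hq1, -⟩ := key a ha
    exact ⟨hq0, hq1⟩
  · intro a ha
    obtain ⟨hq0, hq1, hL⟩ := key a ha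
    have hlq : Real.log (qfun a) < 0 := Real.log_neg hq0 (by linarith)
    refine ⟨Dfun a, part4 a ha, ?_⟩
    rintro D ⟨hD0, hDeq⟩
    obtain ⟨-, hDfeq⟩ := part4 a ha
    have e1 : Real.log (qfun a ^ (D / 2)) = Real.log (qfun a ^ (Dfun a / 2)) := by
      have : qfun a ^ (D / 2) = qfun a ^ (Dfun a / 2) := by linarith
      rw [this]
    rw [Real.log_rpow hq0, Real.log_rpow hq0] at e1
    have : D / 2 = Dfun a / 2 := by
      exact mul_right_cancel₀ hlq.ne e1
    linarith
  · intro a ha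
    obtain ⟨hq0, hq1, hL⟩ := key a ha
    have hlq : Real.log (qfun a) < Real.log (1/3) := Real.log_lt_log hq0 hq1
    have h13 : Real.log (1/3 : ℝ) = -Real.log 3 := by
      rw [show (1/3 : ℝ) = 3⁻¹ by norm_num, Real.log_inv]
    have hLpos : 0 < Real.log (2 - 5*a) - Real.log a - Real.log (1 - 2*a) := by
      rw [hL]; nlinarith [Real.log_pos (show (1:ℝ) < 3 by norm_num)]
    rw [Dfun, div_lt_iff₀ hLpos, h9, hL]
    rw [h13] at hlq
    linarith
  · have hc : ContinuousAt Dfun (1/3 : ℝ) := by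
      have c1 : ContinuousAt (fun a : ℝ => Real.log (2 - 5*a)) (1/3) :=
        ContinuousAt.log (by fun_prop) (by norm_num)
      have c2 : ContinuousAt (fun a : ℝ => Real.log a) (1/3) :=
        ContinuousAt.log (by fun_prop) (by norm_num)
      have c3 : ContinuousAt (fun a : ℝ => Real.log (1 - 2*a)) (1/3) :=
        ContinuousAt.log (by fun_prop) (by norm_num)
      have hden : Real.log (2 - 5*(1/3:ℝ)) - Real.log (1/3:ℝ) - Real.log (1 - 2*(1/3:ℝ)) ≠ 0 := by
        have : (2 - 5*(1/3:ℝ)) = 1/3 := by norm_num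
        rw [this, show (1 - 2*(1/3:ℝ)) = 1/3 by norm_num]
        have : Real.log (1/3 : ℝ) < 0 := Real.log_neg (by norm_num) (by norm_num)
        intro h; nlinarith
      exact ContinuousAt.div continuousAt_const ((c1.sub c2).sub c3) hden
    have : Tendsto Dfun (nhdsWithin (1/3 : ℝ) (Set.Iio (1/3))) (nhds (Dfun (1/3))) :=
      (hc.continuousWithinAt (s := Set.Iio (1/3))).tendsto
    have hval : Dfun (1/3 : ℝ) = 2 := by
      rw [Dfun, show (2 - 5*(1/3:ℝ)) = 1/3 by norm_num,
        show (1 - 2*(1/3:ℝ)) = 1/3 by norm_num, h9,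
        show Real.log (1/3 : ℝ) = -Real.log 3 by
          rw [show (1/3 : ℝ) = 3⁻¹ by norm_num, Real.log_inv]]
      have h3 : Real.log 3 ≠ 0 := (Real.log_pos (by norm_num)).ne'
      field_simp
      norm_num
    rwa [hval] at this
end
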